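/- Let 0 < s = t < 1, n > 2s, and p,q > 0 with pq > 1. If (2s/p + 2s)·p/(pq−1) ≥ n − 2s, then 1/(p+1) + 1/(q+1) > (n − 2s)/n. -/

import Mathlib

/-! Writing `σ = 2s`, condition (4) reads `(n - σ)(pq - 1) ≤ σ(p + 1)`. Since
`(p + 1)(q + 1) = (pq - 1) + (p + q + 2)`, this gives
`(n - σ)(p + 1)(q + 1) ≤ n(p + q + 2) - σ(q + 1) < n(p + q + 2)`,
which is the subcriticality condition after clearing denominators. -/

theorem div_lt_one_div_add_one_div_of_mul_sub_one_le {n σ p q : ℝ} (hσ : 0 < σ) (hn : 0 < n)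
    (hp : 0 < p + 1) (hq : 0 < q + 1) (h : (n - σ) * (p * q - 1) ≤ σ * (p + 1)) :
    (n - σ) / n < 1 / (p + 1) + 1 / (q + 1) := by
  rw [div_add_div _ _ hp.ne' hq.ne', div_lt_div_iff₀ hn (mul_pos hp hq)]
  linear_combination h + mul_pos hσ hq

theorem stmt_2_general (n s p q : ℝ)
    (hs : 0 < s) (hns : 2 * s < n)
    (hp : 0 < p) (hq : 0 < q) (hpq : 1 < p * q)
    (h : (2 * s / p + 2 * s) * p / (p * q - 1) ≥ n - 2 * s) :
    1 / (p + 1) + 1 / (q + 1) > (n - 2 * s) / n := by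
  have hcond : (n - 2 * s) * (p * q - 1) ≤ 2 * s * (p + 1) := by
    have hnum : (2 * s / p + 2 * s) * p = 2 * s * (p + 1) := by
      field_simp
      ring
    rwa [hnum, ge_iff_le, le_div_iff₀ (by linarith)] at h
  exact div_lt_one_div_add_one_div_of_mul_sub_one_le (by positivity) (by linarith)
    (by linarith) (by linarith) hcond

/-- for s = t, condition (4) implies the subcriticality condition
1/(p+1) + 1/(q+1) > (n - 2s)/n. -/
theorem stmt_2 (n s p q : ℝ)
    (hs : 0 < s) (hs1 : s < 1) (hns : 2 * s < n)
    (hp : 0 < p) (hq : 0 < q) (hpq : 1 < p * q)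
    (h : (2 * s / p + 2 * s) * p / (p * q - 1) ≥ n - 2 * s) :
    1 / (p + 1) + 1 / (q + 1) > (n - 2 * s) / n :=
  stmt_2_general n s p q hs hns hp hq hpq h
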